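/- Let X be a real Hilbert space, let A be a nonempty closed affine subspace of X with parallel subspace U := A − A, and let B := {x ∈ X : ⟨x, v⟩ = β} be a hyperplane with ‖v‖ = 1. Suppose P_U(v) ≠ 0, and define Q : X → X by Q(x) := P_A(x) + ((β − ⟨P_A(x), v⟩)/‖P_U(v)‖²) · P_U(v). Then Q coincides with the metric projection onto A ∩ B, i.e. Q(x) = P_{A∩B}(x) for all x ∈ X. -/

import Mathlib

open RealInnerProductSpace Pointwise

/-- The metric (nearest-point) projection onto a set `C` in a real inner product space:
`metricProj C x` is a point of `C` minimizing the distance to `x` (when such a point exists;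
for a nonempty closed convex set in a Hilbert space it exists and is unique). -/
noncomputable def metricProj {X : Type*} [NormedAddCommGroup X] [InnerProductSpace ℝ X]
    (C : Set X) (x : X) : X :=
  letI := Classical.dec (∃ p ∈ C, ∀ q ∈ C, ‖x - p‖ ≤ ‖x - q‖)
  if h : ∃ p ∈ C, ∀ q ∈ C, ‖x - p‖ ≤ ‖x - q‖ then h.choose else 0

section Aux

variable {X : Type*} [NormedAddCommGroup X] [InnerProductSpace ℝ X] [CompleteSpace X]

lemma metricProj_spec (C : Set X) (hne : C.Nonempty) (hc : IsClosed C) (hconv : Convex ℝ C)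
    (x : X) : metricProj C x ∈ C ∧ ∀ q ∈ C, ‖x - metricProj C x‖ ≤ ‖x - q‖ := by
  obtain ⟨p, hp, hpmin⟩ := exists_norm_eq_iInf_of_complete_convex hne hc.isComplete hconv x
  have h : ∃ p ∈ C, ∀ q ∈ C, ‖x - p‖ ≤ ‖x - q‖ := by
    refine ⟨p, hp, fun q hq => ?_⟩
    rw [hpmin]
    exact ciInf_le ⟨0, Set.forall_mem_range.2 fun _ => norm_nonneg _⟩ (⟨q, hq⟩ : C)
  rw [metricProj]
  simp only [dif_pos h]
  exact ⟨h.choose_spec.1, h.choose_spec.2⟩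

lemma metricProj_inner_le (C : Set X) (hne : C.Nonempty) (hc : IsClosed C) (hconv : Convex ℝ C)
    (x : X) : ∀ q ∈ C, ⟪x - metricProj C x, q - metricProj C x⟫ ≤ 0 := by
  obtain ⟨hmem, hmin⟩ := metricProj_spec C hne hc hconv x
  have : Nonempty C := hne.to_subtype
  rw [← norm_eq_iInf_iff_real_inner_le_zero hconv hmem]
  refine le_antisymm (le_ciInf fun w => hmin w w.2)
    (ciInf_le ⟨0, Set.forall_mem_range.2 fun _ => norm_nonneg _⟩ (⟨_, hmem⟩ : C))

lemma metricProj_eq (C : Set X) (hne : C.Nonempty) (hc : IsClosed C) (hconv : Convex ℝ C)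
    (x y : X) (hy : y ∈ C) (hmin : ∀ q ∈ C, ⟪x - y, q - y⟫ ≤ 0) : metricProj C x = y := by
  obtain ⟨hmem, _⟩ := metricProj_spec C hne hc hconv x
  set p := metricProj C x with hp
  have h1 : ⟪x - p, y - p⟫ ≤ 0 := metricProj_inner_le C hne hc hconv x y hy
  have h2 : ⟪x - y, p - y⟫ ≤ 0 := hmin p hmem
  have h3 : ⟪p - y, p - y⟫ ≤ 0 := by
    have hs := add_nonpos h1 h2
    have e : ⟪x - p, y - p⟫ + ⟪x - y, p - y⟫ = ⟪p - y, p - y⟫ := by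
      simp only [inner_sub_left, inner_sub_right, real_inner_comm x y, real_inner_comm x p,
        real_inner_comm y p]
      ring
    linarith [e ▸ hs]
  have : p - y = 0 := by
    have := real_inner_self_nonneg (x := p - y)
    have h0 : ⟪p - y, p - y⟫ = 0 := le_antisymm h3 this
    exact inner_self_eq_zero.mp h0
  exact sub_eq_zero.mp this

end Aux

theorem Q_eq_proj_inter_of_projDir_ne_zero
    {X : Type*} [NormedAddCommGroup X] [InnerProductSpace ℝ X] [CompleteSpace X]
    (A : AffineSubspace ℝ X) (hA : (A : Set X).Nonempty) (hAc : IsClosed (A : Set X))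
    (v : X) (hv : ‖v‖ = 1) (β : ℝ) (B : Set X) (hB : B = {y : X | ⟪y, v⟫ = β})
    (hPU : metricProj (A.direction : Set X) v ≠ 0)
    (Q : X → X)
    (hQ : ∀ x, Q x
      = metricProj (A : Set X) x
        + ((β - ⟪metricProj (A : Set X) x, v⟫) / ‖metricProj (A.direction : Set X) v‖ ^ 2)
            • metricProj (A.direction : Set X) v) :
    ∀ x, Q x = metricProj ((A : Set X) ∩ B) x := by
  intro x
  -- basic sets
  have hAconv : Convex ℝ (A : Set X) := A.convex
  have hUc : IsClosed (A.direction : Set X) := A.isClosed_direction_iff.mpr hAc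
  have hUne : (A.direction : Set X).Nonempty := ⟨0, Submodule.zero_mem _⟩
  have hUconv : Convex ℝ (A.direction : Set X) := A.direction.convex
  set d := metricProj (A.direction : Set X) v with hd
  set p := metricProj (A : Set X) x with hp
  -- d ∈ U and v - d ⟂ U
  have hdU : d ∈ A.direction := (metricProj_spec _ hUne hUc hUconv v).1
  have hortho : ∀ u ∈ A.direction, ⟪v - d, u⟫ = 0 := by
    intro u hu
    have h1 := metricProj_inner_le _ hUne hUc hUconv v (d + u) (A.direction.add_mem hdU hu)
    have h2 := metricProj_inner_le _ hUne hUc hUconv v (d - u)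
      (A.direction.sub_mem hdU (by exact hu))
    rw [add_sub_cancel_left] at h1
    rw [show d - u - d = -u by abel, inner_neg_right] at h2
    linarith
  -- p ∈ A and x - p ⟂ U
  have hpA : p ∈ A := (metricProj_spec _ hA hAc hAconv x).1
  have hmemA : ∀ u ∈ A.direction, p + u ∈ A := by
    intro u hu
    have := AffineSubspace.vadd_mem_of_mem_direction hu hpA
    simpa [vadd_eq_add, add_comm] using this
  have hporth : ∀ u ∈ A.direction, ⟪x - p, u⟫ = 0 := by
    intro u hu
    have h1 := metricProj_inner_le _ hA hAc hAconv x (p + u) (hmemA u hu)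
    have h2 := metricProj_inner_le _ hA hAc hAconv x (p + (-u)) (hmemA (-u) (A.direction.neg_mem hu))
    rw [add_sub_cancel_left, ← hp] at h1 h2
    rw [inner_neg_right] at h2
    linarith
  -- norm of d
  have hdd : ⟪d, v⟫ = ‖d‖ ^ 2 := by
    have := hortho d hdU
    rw [inner_sub_left] at this
    rw [real_inner_comm]
    rw [← real_inner_self_eq_norm_sq]
    linarith
  have hdne : ‖d‖ ^ 2 ≠ 0 := pow_ne_zero _ (norm_ne_zero_iff.mpr hPU)
  set t : ℝ := (β - ⟪p, v⟫) / ‖d‖ ^ 2 with ht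
  have hQx : Q x = p + t • d := hQ x
  -- Q x ∈ A
  have hQA : Q x ∈ A := by
    rw [hQx]; exact hmemA _ (A.direction.smul_mem t hdU)
  -- ⟪Q x, v⟫ = β
  have hQB : ⟪Q x, v⟫ = β := by
    rw [hQx, inner_add_left, real_inner_smul_left, hdd, ht]
    field_simp
    ring
  -- B properties
  have hBc : IsClosed B := by
    rw [hB]
    exact isClosed_eq (Continuous.inner continuous_id continuous_const) continuous_const
  have hBconv : Convex ℝ B := by
    rw [hB]
    intro a ha b hb s r hs hr hsr
    simp only [Set.mem_setOf_eq] at *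
    rw [inner_add_left, real_inner_smul_left, real_inner_smul_left, ha, hb]
    linear_combination β * hsr
  have hQmem : Q x ∈ (A : Set X) ∩ B := ⟨hQA, by rw [hB]; exact hQB⟩
  -- key: x - Q x ⟂ (q - Q x) for q ∈ A ∩ B
  symm
  refine metricProj_eq _ ⟨Q x, hQmem⟩ (hAc.inter hBc) (hAconv.inter hBconv) x (Q x) hQmem ?_
  intro q hq
  have hu : q - Q x ∈ A.direction := by
    have := AffineSubspace.vsub_mem_direction hq.1 hQA
    simpa [vsub_eq_sub] using this
  have hqB : ⟪q, v⟫ = β := by have := hq.2; rw [hB] at this; exact this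
  have hvu : ⟪v, q - Q x⟫ = 0 := by
    rw [inner_sub_right, real_inner_comm q v, real_inner_comm (Q x) v, hqB, hQB, sub_self]
  have hdu : ⟪d, q - Q x⟫ = 0 := by
    have h2 := hortho (q - Q x) hu
    rw [inner_sub_left] at h2
    linarith [hvu]
  have h1 : ⟪x - p, q - Q x⟫ = 0 := hporth _ hu
  have : x - Q x = (x - p) - t • d := by rw [hQx]; abel
  rw [this, inner_sub_left, real_inner_smul_left, h1, hdu]
  simp
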